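/- Let (H_n, K_n)_{n≥1} be a sequence of pairs of positive reals such that for every n the bifractional Brownian motion covariance R_{H_n,K_n}(s,t) = 2^{−K_n}((t^{2H_n} + s^{2H_n})^{K_n} − |t−s|^{2H_nK_n}) is nonnegative definite on [0,∞), and such that H_n → ∞ as n → ∞. Then limsup_{n→∞} 2 H_n K_n ≤ 1. -/
import Mathlib


open scoped ComplexOrder
open Filter

/-- The bifractional Brownian motion covariance kernel. -/
noncomputable def Rbif (H K s t : ℝ) : ℝ :=
  (2 : ℝ) ^ (-K) * ((t ^ (2 * H) + s ^ (2 * H)) ^ K - |t - s| ^ (2 * H * K))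

lemma Rbif_self (H K t : ℝ) (hHK : 2 * H * K ≠ 0) (ht : 0 ≤ t) :
    Rbif H K t t = t ^ (2 * H * K) := by
  unfold Rbif
  rw [sub_self, abs_zero, Real.zero_rpow hHK]
  have h1 : t ^ (2*H) + t ^ (2*H) = 2 * t ^ (2*H) := by ring
  rw [h1, Real.mul_rpow (by norm_num) (Real.rpow_nonneg ht _),
    ← Real.rpow_mul ht, sub_zero, ← mul_assoc, ← Real.rpow_add (by norm_num : (0:ℝ) < 2)]
  norm_num

lemma Rbif_symm (H K s t : ℝ) : Rbif H K s t = Rbif H K t s := by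
  unfold Rbif; rw [add_comm (t ^ (2*H)), abs_sub_comm]

lemma Rbif_quad {H K : ℕ → ℝ}
    (hnn : ∀ (n : ℕ) (m : ℕ) (t : Fin m → ℝ), (∀ i, 0 ≤ t i) → ∀ z : Fin m → ℂ,
      0 ≤ ∑ j : Fin m, ∑ k : Fin m,
        z j * ((Rbif (H n) (K n) (t j) (t k) : ℝ) : ℂ) * (starRingEnd ℂ) (z k))
    (n : ℕ) (s t c d : ℝ) (hs : 0 ≤ s) (ht : 0 ≤ t) :
    0 ≤ c * c * Rbif (H n) (K n) s s + c * d * Rbif (H n) (K n) s t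
      + d * c * Rbif (H n) (K n) t s + d * d * Rbif (H n) (K n) t t := by
  have := hnn n 2 ![s, t] (by
    intro i; fin_cases i <;> simpa) ![(c : ℂ), (d : ℂ)]
  simp only [Fin.sum_univ_two, Matrix.cons_val_zero, Matrix.cons_val_one, Matrix.head_cons,
    Complex.conj_ofReal] at this
  rw [show ((c:ℂ) * (Rbif (H n) (K n) s s : ℝ) * c + (c:ℂ) * (Rbif (H n) (K n) s t:ℝ) * d)
      + ((d:ℂ) * (Rbif (H n) (K n) t s:ℝ) * c + (d:ℂ) * (Rbif (H n) (K n) t t:ℝ) * d)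
      = ((c * c * Rbif (H n) (K n) s s + c * d * Rbif (H n) (K n) s t
      + d * c * Rbif (H n) (K n) t s + d * d * Rbif (H n) (K n) t t : ℝ) : ℂ) by
      push_cast; ring] at this
  exact_mod_cast this

lemma step1 (Hn Kn : ℝ) (h0H : 0 < Hn) (h0K : 0 < Kn) (hH4 : 4 ≤ Hn)
    (hq : ∀ c d : ℝ, 0 ≤ c*c*Rbif Hn Kn 1 1 + c*d*Rbif Hn Kn 1 2
      + d*c*Rbif Hn Kn 2 1 + d*d*Rbif Hn Kn 2 2) :
    2*Hn*Kn ≤ 4 := by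
  set a := 2*Hn*Kn with hadef
  have ha : 0 < a := by positivity
  have hR11 : Rbif Hn Kn 1 1 = 1 := by
    rw [Rbif_self _ _ _ ha.ne' zero_le_one, Real.one_rpow]
  have hR22 : Rbif Hn Kn 2 2 = 2 ^ a := by
    rw [Rbif_self _ _ _ ha.ne' (by norm_num)]
  have hRX : 2^(-Kn) * (2^a - 1) ≤ Rbif Hn Kn 1 2 := by
    unfold Rbif
    have h1 : |(2:ℝ) - 1| ^ (2*Hn*Kn) = 1 := by norm_num
    rw [h1]
    have h2 : (2:ℝ)^a ≤ ((2:ℝ) ^ (2*Hn) + 1 ^ (2*Hn)) ^ Kn := by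
      have : (2:ℝ)^a = ((2:ℝ)^(2*Hn))^Kn := by
        rw [← Real.rpow_mul (by norm_num), hadef, mul_assoc]
      rw [this, Real.one_rpow]
      exact Real.rpow_le_rpow (by positivity) (by linarith) h0K.le
    have h3 : (0:ℝ) < 2^(-Kn) := Real.rpow_pos_of_pos (by norm_num) _
    nlinarith
  by_contra h4
  push_neg at h4
  set lam := (2:ℝ)^(-(a/2)) with hlam
  have hlam0 : 0 < lam := Real.rpow_pos_of_pos (by norm_num) _
  have hlamsq : lam * lam * 2^a = 1 := by
    rw [hlam, ← Real.rpow_add (by norm_num : (0:ℝ) < 2),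
      ← Real.rpow_add (by norm_num : (0:ℝ) < 2)]
    rw [show -(a/2) + -(a/2) + a = 0 by ring, Real.rpow_zero]
  have hquad := hq 1 (-lam)
  rw [hR11, hR22, Rbif_symm Hn Kn 2 1] at hquad
  have hR12 : lam * Rbif Hn Kn 1 2 ≤ 1 := by nlinarith
  have hkey : lam * (2^(-Kn) * (2^a - 1)) ≤ 1 :=
    le_trans (by

      have h2a : (0:ℝ) ≤ 2^a - 1 → True := fun _ => trivial
      nlinarith [Real.rpow_pos_of_pos (by norm_num : (0:ℝ) < 2) (-Kn)]) hR12
  have hprod : lam * 2^(-Kn) = (2:ℝ)^(-(a/2+Kn)) := by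
    rw [hlam, ← Real.rpow_add (by norm_num : (0:ℝ) < 2)]
    ring_nf
  have hfin : 2^a - 1 ≤ (2:ℝ)^(a/2+Kn) := by
    have hx : (0:ℝ) < (2:ℝ)^(-(a/2+Kn)) := Real.rpow_pos_of_pos (by norm_num) _
    have : (2:ℝ)^(-(a/2+Kn)) * (2^a - 1) ≤ 1 := by
      rw [← hprod]; linarith [hkey, mul_assoc lam (2^(-Kn)) (2^a-1)]
    have h2 : (2:ℝ)^(-(a/2+Kn)) = ((2:ℝ)^(a/2+Kn))⁻¹ := by
      rw [Real.rpow_neg (by norm_num)]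
    rw [h2] at this
    have hp : (0:ℝ) < (2:ℝ)^(a/2+Kn) := Real.rpow_pos_of_pos (by norm_num) _
    calc 2^a - 1 = ((2:ℝ)^(a/2+Kn))⁻¹ * (2^a-1) * (2:ℝ)^(a/2+Kn) := by field_simp
    _ ≤ 1 * (2:ℝ)^(a/2+Kn) := by apply mul_le_mul_of_nonneg_right this hp.le
    _ = (2:ℝ)^(a/2+Kn) := one_mul _
  have hK8 : Kn ≤ a/8 := by nlinarith
  have h58 : (2:ℝ)^(a/2+Kn) ≤ (2:ℝ)^(5*a/8) :=
    Real.rpow_le_rpow_of_exponent_le (by norm_num) (by linarith)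
  have hbig : (2:ℝ)^(5*a/8) + (2:ℝ)^(5*a/8) ≤ (2:ℝ)^a := by
    have h1 : (2:ℝ)^a = (2:ℝ)^(5*a/8) * (2:ℝ)^(3*a/8) := by
      rw [← Real.rpow_add (by norm_num : (0:ℝ) < 2)]; ring_nf
    have h2 : (2:ℝ) ≤ (2:ℝ)^(3*a/8) := by
      calc (2:ℝ) = (2:ℝ)^(1:ℝ) := (Real.rpow_one 2).symm
      _ ≤ _ := Real.rpow_le_rpow_of_exponent_le (by norm_num) (by linarith)
    nlinarith [Real.rpow_pos_of_pos (by norm_num : (0:ℝ) < 2) (5*a/8)]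
  have h1lt : (1:ℝ) < (2:ℝ)^(5*a/8) := by
    calc (1:ℝ) = (2:ℝ)^(0:ℝ) := (Real.rpow_zero 2).symm
    _ < _ := Real.rpow_lt_rpow_of_exponent_lt (by norm_num) (by linarith)
  linarith

lemma step2 (Hn Kn ε δ : ℝ) (h0H : 0 < Hn) (h0K : 0 < Kn) (hε : 0 < ε)
    (hδ0 : 0 < δ) (hδhalf : δ ≤ 1/2) (hδε : δ^ε ≤ 1/8) (hKδ : Kn ≤ δ/8)
    (hq : 0 ≤ 1*1*Rbif Hn Kn (1-δ) (1-δ) + 1*(-1)*Rbif Hn Kn (1-δ) 1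
      + (-1)*1*Rbif Hn Kn 1 (1-δ) + (-1)*(-1)*Rbif Hn Kn 1 1) :
    2*Hn*Kn ≤ 1+ε := by
  by_contra hcon
  push_neg at hcon
  set a := 2*Hn*Kn with hadef
  have ha : (1:ℝ) < a := by linarith
  have hδ1 : δ < 1 := by linarith
  have hRss : Rbif Hn Kn (1-δ) (1-δ) = (1-δ)^a :=
    Rbif_self _ _ _ (by positivity) (by linarith)
  have hR11 : Rbif Hn Kn 1 1 = 1 := by
    rw [Rbif_self _ _ _ (by positivity) zero_le_one, Real.one_rpow]
  have hC0 : (0:ℝ) < 2^(-Kn) := Real.rpow_pos_of_pos (by norm_num) _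
  have hRs1 : 2^(-Kn) * (1 - δ^a) ≤ Rbif Hn Kn (1-δ) 1 := by
    unfold Rbif
    have h1 : |(1:ℝ) - (1-δ)| ^ (2*Hn*Kn) = δ^a := by
      rw [show |(1:ℝ) - (1-δ)| = δ by rw [abs_of_nonneg] <;> linarith]
    rw [h1]
    have h2 : (1:ℝ) ≤ ((1:ℝ) ^ (2*Hn) + (1-δ) ^ (2*Hn)) ^ Kn := by
      calc (1:ℝ) = (1:ℝ)^Kn := (Real.one_rpow _).symm
      _ ≤ _ := Real.rpow_le_rpow zero_le_one
          (by rw [Real.one_rpow];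
              have := Real.rpow_nonneg (show (0:ℝ) ≤ 1-δ by linarith) (2*Hn); linarith) h0K.le
    nlinarith
  rw [hRss, hR11, Rbif_symm Hn Kn 1 (1-δ)] at hq
  have hmain : 2 * (2^(-Kn) * (1 - δ^a)) ≤ (1-δ)^a + 1 := by nlinarith
  have h1 : (1-δ)^a ≤ 1-δ := by
    calc (1-δ)^a ≤ (1-δ)^(1:ℝ) :=
      Real.rpow_le_rpow_of_exponent_ge (by linarith) (by linarith) ha.le
    _ = 1-δ := Real.rpow_one _
  have h2 : δ^a ≤ δ/8 := by
    calc δ^a ≤ δ^(1+ε) :=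
      Real.rpow_le_rpow_of_exponent_ge hδ0 (by linarith) hcon.le
    _ = δ * δ^ε := by rw [Real.rpow_add hδ0, Real.rpow_one]
    _ ≤ δ * (1/8) := by nlinarith [Real.rpow_nonneg hδ0.le ε]
    _ = δ/8 := by ring
  have h3 : 1 - Kn ≤ 2^(-Kn) := by
    have he : Real.log 2 * (-Kn) + 1 ≤ Real.exp (Real.log 2 * (-Kn)) :=
      Real.add_one_le_exp _
    have hd : (2:ℝ)^(-Kn) = Real.exp (Real.log 2 * (-Kn)) :=
      Real.rpow_def_of_pos (by norm_num) _
    have hlog : Real.log 2 ≤ 1 := by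
      have := Real.log_le_sub_one_of_pos (by norm_num : (0:ℝ) < 2)
      linarith
    have hl0 : 0 ≤ Real.log 2 := Real.log_nonneg (by norm_num)
    rw [hd]
    nlinarith
  have hB0 : 0 ≤ δ^a := Real.rpow_nonneg hδ0.le a
  have hstep : (1-Kn)*(1-δ/8) ≤ 2^(-Kn) * (1 - δ^a) := by nlinarith
  nlinarith [mul_nonneg h0K.le hδ0.le]

/-- If `(H_n, K_n)` are positive reals such that each `R_{H_n,K_n}` is nonnegative
definite on `[0,∞)`, and `H_n → ∞`, then `limsup 2 H_n K_n ≤ 1`. -/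
theorem limsup_two_HK_le_one (H K : ℕ → ℝ)
    (hH : ∀ n, 0 < H n) (hK : ∀ n, 0 < K n)
    (hnn : ∀ (n : ℕ) (m : ℕ) (t : Fin m → ℝ), (∀ i, 0 ≤ t i) → ∀ z : Fin m → ℂ,
      0 ≤ ∑ j : Fin m, ∑ k : Fin m,
        z j * ((Rbif (H n) (K n) (t j) (t k) : ℝ) : ℂ) * (starRingEnd ℂ) (z k))
    (hHtop : Tendsto H atTop atTop) :
    limsup (fun n => 2 * H n * K n) atTop ≤ 1 := by
  refine le_of_forall_pos_le_add fun ε hε => ?_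
  have hcob : IsCoboundedUnder (· ≤ ·) atTop (fun n => 2 * H n * K n) :=
    isCoboundedUnder_le_of_le atTop (x := 0)
      (fun n => by have := hH n; have := hK n; positivity)
  refine limsup_le_of_le hcob ?_
  set δ := min (1/2 : ℝ) ((1/8 : ℝ)^(ε⁻¹)) with hδdef
  have hδ0 : 0 < δ :=
    lt_min (by norm_num) (Real.rpow_pos_of_pos (by norm_num) _)
  have hδhalf : δ ≤ 1/2 := min_le_left _ _
  have hδε : δ^ε ≤ 1/8 := by
    calc δ^ε ≤ ((1/8 : ℝ)^(ε⁻¹))^ε :=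
      Real.rpow_le_rpow hδ0.le (min_le_right _ _) hε.le
    _ = (1/8 : ℝ)^(ε⁻¹ * ε) := by rw [← Real.rpow_mul (by norm_num)]
    _ = 1/8 := by rw [inv_mul_cancel₀ hε.ne', Real.rpow_one]
  filter_upwards [hHtop.eventually_ge_atTop (max 4 (16/δ))] with n hn
  have hH4 : 4 ≤ H n := le_trans (le_max_left _ _) hn
  have hH16 : 16/δ ≤ H n := le_trans (le_max_right _ _) hn
  have ha4 : 2 * H n * K n ≤ 4 :=
    step1 (H n) (K n) (hH n) (hK n) hH4
      (fun c d => Rbif_quad hnn n 1 2 c d zero_le_one (by norm_num))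
  have h16 : 16 ≤ H n * δ := (div_le_iff₀ hδ0).mp hH16
  have hKδ : K n ≤ δ/8 := by nlinarith [hH n, hK n]
  exact step2 (H n) (K n) ε δ (hH n) (hK n) hε hδ0 hδhalf hδε hKδ
    (Rbif_quad hnn n (1-δ) 1 1 (-1) (by linarith) zero_le_one)
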